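/- arXiv:2309.04690 — 2 statements merged into one kernel-verified Lean document; each statement's English description precedes it below -/
import Mathlib

section
/- Let R > 0, let z₀ ∈ ℂ with |z₀| = R, and let U be an open neighborhood of z₀. Then there exists an open set V containing the closed disc of radius R centered at 0 and a holomorphic function X : V → ℂ such that |X(z)| < 1 for every z in the closed disc of radius R with z ∉ U, while |X(z₀)| > 1. -/
/-!
The affine function `z ↦ (z₀ + z) / (2 z₀)` is entire, equals `1` at `z₀`, and, since closed discs
are strictly convex, has modulus `< 1` at every other point of the closed disc of radius `‖z₀‖`.
On the compact set `closedBall 0 R \ U` the strict inequality survives multiplication by some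
constant `c > 1`, and that multiple is the required function, holomorphic on all of `ℂ`.
-/

open Filter Topology

theorem IsCompact.exists_one_lt_forall_mul_lt_one {X : Type*} [TopologicalSpace X] {K : Set X}
    (hK : IsCompact K) {g : X → ℝ} (hg : Continuous g) (h : ∀ x ∈ K, g x < 1) :
    ∃ c : ℝ, 1 < c ∧ ∀ x ∈ K, c * g x < 1 := by
  have hnear : ∀ᶠ c in 𝓝 (1 : ℝ), ∀ x ∈ K, c * g x < 1 :=
    hK.eventually_forall_of_forall_eventually fun x hx =>
      (isOpen_lt (by fun_prop) continuous_const).mem_nhds (by simpa using h x hx)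
  exact (eventually_mem_nhdsWithin.and (hnear.filter_mono nhdsWithin_le_nhds) :
    ∀ᶠ c in 𝓝[>] (1 : ℝ), _).exists

noncomputable def peakAt (z₀ z : ℂ) : ℂ := (z₀ + z) / 2 / z₀

theorem differentiable_peakAt (z₀ : ℂ) : Differentiable ℂ (peakAt z₀) := by
  unfold peakAt; fun_prop

theorem peakAt_self {z₀ : ℂ} (h : z₀ ≠ 0) : peakAt z₀ z₀ = 1 := by
  rw [peakAt, add_self_div_two, div_self h]

theorem norm_peakAt_lt_one {z₀ z : ℂ} (hz : ‖z‖ ≤ ‖z₀‖) (hne : z ≠ z₀) : ‖peakAt z₀ z‖ < 1 := by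
  have hmid : ‖(1 / 2 : ℝ) • z₀ + (1 / 2 : ℝ) • z‖ < ‖z₀‖ :=
    norm_combo_lt_of_ne le_rfl hz hne.symm (by norm_num) (by norm_num) (by norm_num)
  have hcombo : (1 / 2 : ℝ) • z₀ + (1 / 2 : ℝ) • z = (z₀ + z) / 2 := by
    simp only [Complex.real_smul]; push_cast; ring
  rw [hcombo] at hmid
  rwa [peakAt, norm_div, div_lt_one ((norm_nonneg _).trans_lt hmid)]

/-- Key Lemma: a holomorphic function on a neighborhood of the closed disc of
radius `R`, of modulus `< 1` off a neighborhood `U` of a boundary point `z₀`,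
but of modulus `> 1` at `z₀`. -/
theorem key_lemma (R : ℝ) (hR : 0 < R) (z₀ : ℂ) (hz₀ : ‖z₀‖ = R)
    (U : Set ℂ) (hU : IsOpen U) (hz₀U : z₀ ∈ U) :
    ∃ V : Set ℂ, IsOpen V ∧ Metric.closedBall (0 : ℂ) R ⊆ V ∧
      ∃ X : ℂ → ℂ, DifferentiableOn ℂ X V ∧
        (∀ z ∈ Metric.closedBall (0 : ℂ) R, z ∉ U → ‖X z‖ < 1) ∧
        1 < ‖X z₀‖ := by
  have hz₀_ne : z₀ ≠ 0 := norm_pos_iff.mp (hz₀ ▸ hR)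
  obtain ⟨c, hc, hcK⟩ := ((isCompact_closedBall (0 : ℂ) R).diff hU).exists_one_lt_forall_mul_lt_one
    (differentiable_peakAt z₀).continuous.norm fun z ⟨hzR, hzU⟩ =>
      norm_peakAt_lt_one (hz₀ ▸ mem_closedBall_zero_iff.mp hzR) fun h => hzU (h ▸ hz₀U)
  refine ⟨Set.univ, isOpen_univ, Set.subset_univ _, fun z => c * peakAt z₀ z,
    ((differentiable_peakAt z₀).const_mul _).differentiableOn, fun z hzR hzU => ?_, ?_⟩
  · simpa [abs_of_pos (one_pos.trans hc)] using hcK z ⟨hzR, hzU⟩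
  · simpa [peakAt_self hz₀_ne, abs_of_pos (one_pos.trans hc)]
end

section
/- Let g, X be holomorphic functions on a neighborhood of the closed disc D̄_R, and suppose there is a closed disc D̄(c, r) ⊂ 𝔻_R on which |X(z)| ≥ m^{2/3} > 1 (where m = max_{D̄_R}|X| > 1) and |g(z)·X'(z)| ≥ μ > 0. For M ∈ ℤ₊ define h_M := g·(1 + X^M). Then for every z ∈ D̄(c,r), |h_M'(z)|² ≥ (1/4)·M²·μ²·m^{(4/3)(M−1)} − (sup_{D̄_R}|g'|)²·(1 + m^M)². -/
/-!
Write `h_M' = A + B` with `A = M·X^{M-1}·(g·X')` and `B = g'·(1 + X^M)`. On the small disc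
`|A| ≥ M·(m^{2/3})^{M-1}·μ`, while `|B| ≤ sup|g'|·(1 + m^M)` on the whole disc, and
`|A + B|² ≥ |A|²/4 - |B|²` for any two vectors.
-/

theorem sq_div_four_sub_sq_le_norm_add_sq {E : Type*} [SeminormedAddCommGroup E] {a b : E}
    {s t : ℝ} (ht : 0 ≤ t) (hta : t ≤ ‖a‖) (hbs : ‖b‖ ≤ s) :
    t ^ 2 / 4 - s ^ 2 ≤ ‖a + b‖ ^ 2 := by
  have htri : ‖a‖ ≤ ‖a + b‖ + ‖b‖ := by
    simpa using norm_add_le (a + b) (-b)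
  have hsq : t ^ 2 ≤ (‖a + b‖ + ‖b‖) ^ 2 := pow_le_pow_left₀ ht (hta.trans htri) 2
  nlinarith [norm_nonneg b, sq_nonneg (‖a + b‖ - ‖b‖)]

theorem hasDerivAt_mul_one_add_pow {𝕜 : Type*} [NontriviallyNormedField 𝕜] {g X : 𝕜 → 𝕜}
    {g' X' z : 𝕜} (hg : HasDerivAt g g' z) (hX : HasDerivAt X X' z) (M : ℕ) :
    HasDerivAt (fun w => g w * (1 + X w ^ M))
      (M * X z ^ (M - 1) * (g z * X') + g' * (1 + X z ^ M)) z :=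
  (hg.fun_mul ((hX.fun_pow M).const_add 1)).congr_deriv (by ring)

theorem natCast_mul_pow_mul_le_norm {𝕜 : Type*} [RCLike 𝕜] {x y : 𝕜} {a μ : ℝ}
    (ha : 0 ≤ a) (hax : a ≤ ‖x‖) (hμ : 0 ≤ μ) (hμy : μ ≤ ‖y‖) (n k : ℕ) :
    n * a ^ k * μ ≤ ‖(n : 𝕜) * x ^ k * y‖ := by
  rw [norm_mul, norm_mul, norm_pow, RCLike.norm_natCast]
  gcongr

theorem norm_one_add_pow_le {𝕜 : Type*} [NormedRing 𝕜] [NormOneClass 𝕜] {x : 𝕜} {m : ℝ}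
    (hxm : ‖x‖ ≤ m) (M : ℕ) : ‖1 + x ^ M‖ ≤ 1 + m ^ M :=
  calc ‖1 + x ^ M‖ ≤ 1 + ‖x‖ ^ M := by
        simpa using norm_add_le_of_le (norm_one (α := 𝕜)).le (norm_pow_le x M)
    _ ≤ 1 + m ^ M := by gcongr

theorem rpow_pow_pred_sq {m : ℝ} (hm : 0 ≤ m) (e : ℝ) {M : ℕ} (hM : 1 ≤ M) :
    ((m ^ e) ^ (M - 1)) ^ 2 = m ^ (2 * e * ((M : ℝ) - 1)) := by
  rw [← Real.rpow_natCast _ (M - 1), ← Real.rpow_mul hm, ← Real.rpow_natCast _ 2,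
    ← Real.rpow_mul hm, Nat.cast_sub hM, Nat.cast_one, Nat.cast_ofNat]
  ring_nf

theorem perturbed_deriv_lower_bound_general (g X : ℂ → ℂ) (R r : ℝ) (c : ℂ)
    (m μ C' : ℝ) (hμ : 0 < μ)
    (V : Set ℂ) (hV : IsOpen V) (hRV : Metric.closedBall (0 : ℂ) R ⊆ V)
    (hg : DifferentiableOn ℂ g V) (hX : DifferentiableOn ℂ X V)
    (hsub : Metric.closedBall c r ⊆ Metric.ball (0 : ℂ) R)
    (hXm : ∀ z ∈ Metric.closedBall (0 : ℂ) R, ‖X z‖ ≤ m)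
    (hXlow : ∀ z ∈ Metric.closedBall c r, m ^ ((2 : ℝ) / 3) ≤ ‖X z‖)
    (hgX : ∀ z ∈ Metric.closedBall c r, μ ≤ ‖g z * deriv X z‖)
    (hg' : ∀ z ∈ Metric.closedBall (0 : ℂ) R, ‖deriv g z‖ ≤ C') :
    ∀ M : ℕ, 1 ≤ M → ∀ z ∈ Metric.closedBall c r,
      (1 / 4) * (M : ℝ) ^ 2 * μ ^ 2 * m ^ ((4 / 3 : ℝ) * ((M : ℝ) - 1))
          - C' ^ 2 * (1 + m ^ M) ^ 2
        ≤ ‖deriv (fun w => g w * (1 + X w ^ M)) z‖ ^ 2 := by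
  intro M hM z hz
  have hzR : z ∈ Metric.closedBall (0 : ℂ) R := Metric.ball_subset_closedBall (hsub hz)
  have hVz : V ∈ nhds z := hV.mem_nhds (hRV hzR)
  have hm : 0 ≤ m := (norm_nonneg _).trans (hXm z hzR)
  rw [(hasDerivAt_mul_one_add_pow (hg.differentiableAt hVz).hasDerivAt
    (hX.differentiableAt hVz).hasDerivAt M).deriv]
  have hA := natCast_mul_pow_mul_le_norm (Real.rpow_nonneg hm _) (hXlow z hz) hμ.le
    (hgX z hz) M (M - 1)
  have hB : ‖deriv g z * (1 + X z ^ M)‖ ≤ C' * (1 + m ^ M) := by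
    rw [norm_mul]
    exact mul_le_mul (hg' z hzR) (norm_one_add_pow_le (hXm z hzR) M) (norm_nonneg _)
      ((norm_nonneg _).trans (hg' z hzR))
  calc _ = (M * (m ^ ((2 : ℝ) / 3)) ^ (M - 1) * μ) ^ 2 / 4 - (C' * (1 + m ^ M)) ^ 2 := by
        rw [mul_pow, mul_pow, rpow_pow_pred_sq hm _ hM]
        norm_num
        ring
    _ ≤ _ := sq_div_four_sub_sq_le_norm_add_sq (by positivity) hA hB

/-- Central derivative lower bound for the perturbations `h_M = g·(1 + X^M)`. -/
theorem perturbed_deriv_lower_bound (g X : ℂ → ℂ) (R r : ℝ) (c : ℂ)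
    (m μ C' : ℝ) (hm : 1 < m) (hμ : 0 < μ) (hC' : 0 ≤ C')
    (V : Set ℂ) (hV : IsOpen V) (hRV : Metric.closedBall (0 : ℂ) R ⊆ V)
    (hg : DifferentiableOn ℂ g V) (hX : DifferentiableOn ℂ X V)
    (hr : 0 < r) (hsub : Metric.closedBall c r ⊆ Metric.ball (0 : ℂ) R)
    (hXm : ∀ z ∈ Metric.closedBall (0 : ℂ) R, ‖X z‖ ≤ m)
    (hXlow : ∀ z ∈ Metric.closedBall c r, m ^ ((2 : ℝ) / 3) ≤ ‖X z‖)
    (hgX : ∀ z ∈ Metric.closedBall c r, μ ≤ ‖g z * deriv X z‖)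
    (hg' : ∀ z ∈ Metric.closedBall (0 : ℂ) R, ‖deriv g z‖ ≤ C') :
    ∀ M : ℕ, 1 ≤ M → ∀ z ∈ Metric.closedBall c r,
      (1 / 4) * (M : ℝ) ^ 2 * μ ^ 2 * m ^ ((4 / 3 : ℝ) * ((M : ℝ) - 1))
          - C' ^ 2 * (1 + m ^ M) ^ 2
        ≤ ‖deriv (fun w => g w * (1 + X w ^ M)) z‖ ^ 2 :=
  perturbed_deriv_lower_bound_general g X R r c m μ C' hμ V hV hRV hg hX hsub hXm hXlow hgX hg'
end
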